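/- Let G1 and G2 be disjoint multigraphs each with at least two edges, and let G = (G1,e1,u1) ⋄ (G2,e2,u2) be their vertex-edge-identification. Then G is biconnected if and only if both G1 and G2 are biconnected. -/

import Mathlib

open scoped Classical

/-- A finite multigraph without loops: a vertex type, an edge type, and an
incidence map assigning to each edge an unordered pair of distinct vertices. -/
structure MGraph where
  V : Type
  E : Type
  finV : Finite V
  finE : Finite E
  ends : E → Sym2 V
  noLoop : ∀ e, ¬ (ends e).IsDiag

namespace MGraph

variable (G : MGraph)

/-- Degree of a vertex counting only edges in the edge set `F`. -/
noncomputable def degOn (F : Set G.E) (v : G.V) : ℕ := {e | e ∈ F ∧ v ∈ G.ends e}.ncard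

/-- Degree of a vertex. -/
noncomputable def deg (v : G.V) : ℕ := G.degOn Set.univ v

/-- Adjacency using only edges from `F`. -/
def AdjOn (F : Set G.E) (a b : G.V) : Prop := ∃ e ∈ F, G.ends e = s(a, b)

/-- Reachability using only edges from `F`. -/
def ReachOn (F : Set G.E) : G.V → G.V → Prop := Relation.ReflTransGen (G.AdjOn F)

/-- Connectivity of a multigraph. -/
def Connected : Prop := Nonempty G.V ∧ ∀ a b : G.V, G.ReachOn Set.univ a b

/-- A set of edges forms a cycle: it is nonempty, every vertex has degree 0 or 2
in it, and any two of its endpoints are joined by a path inside it. -/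
def IsCycle (C : Set G.E) : Prop :=
  C.Nonempty ∧ (∀ v, G.degOn C v = 0 ∨ G.degOn C v = 2) ∧
    ∀ e ∈ C, ∀ f ∈ C, ∀ a b : G.V, a ∈ G.ends e → b ∈ G.ends f → G.ReachOn C a b

/-- A cycle decomposition of the edge set `F`: a set of cycles inside `F` such
that every edge of `F` lies in exactly one of them. -/
def IsCycleDecompOn (F : Set G.E) (D : Set (Set G.E)) : Prop :=
  (∀ C ∈ D, G.IsCycle C ∧ C ⊆ F) ∧ ∀ e ∈ F, ∃! C, C ∈ D ∧ e ∈ C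

/-- A cycle decomposition of the graph. -/
def IsCycleDecomp (D : Set (Set G.E)) : Prop := G.IsCycleDecompOn Set.univ D

/-- Minimum number of cycles in a cycle decomposition of `F`. -/
noncomputable def cOn (F : Set G.E) : ℕ :=
  sInf {n | ∃ D, G.IsCycleDecompOn F D ∧ D.ncard = n}

/-- Maximum number of cycles in a cycle decomposition of `F`. -/
noncomputable def nuOn (F : Set G.E) : ℕ :=
  sSup {n | ∃ D, G.IsCycleDecompOn F D ∧ D.ncard = n}

/-- Minimum cycle number. -/
noncomputable def c : ℕ := G.cOn Set.univ

/-- Maximum cycle number. -/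
noncomputable def nu : ℕ := G.nuOn Set.univ

/-- A multigraph is Eulerian if it admits a closed walk traversing every edge
exactly once. -/
def IsEulerian : Prop :=
  ∃ (vs : List G.V) (es : List G.E),
    vs.length = es.length + 1 ∧
    (∀ (i : ℕ) (e : G.E) (a b : G.V), es[i]? = some e → vs[i]? = some a →
      vs[i + 1]? = some b → G.ends e = s(a, b)) ∧
    vs.head? = vs.getLast? ∧ es.Nodup ∧ ∀ e : G.E, e ∈ es

/-- A cut-edge (bridge): its endpoints are disconnected after its removal. -/
def IsBridge (e : G.E) : Prop :=
  ∃ a b, G.ends e = s(a, b) ∧ ¬ G.ReachOn {e}ᶜ a b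

/-- 2-edge-connectivity: connected and without cut-edges. -/
def TwoEdgeConnected : Prop := G.Connected ∧ ∀ e, ¬ G.IsBridge e

/-- Reachability avoiding a vertex. -/
def ReachAvoid (v : G.V) (a b : G.V) : Prop :=
  Relation.ReflTransGen (fun x y => x ≠ v ∧ y ≠ v ∧ G.AdjOn Set.univ x y) a b

/-- A cut-vertex: two vertices in the same component get separated by its removal. -/
def IsCutVertex (v : G.V) : Prop :=
  ∃ a b, a ≠ v ∧ b ≠ v ∧ G.ReachOn Set.univ a b ∧ ¬ G.ReachAvoid v a b

/-- Biconnected: connected, at least two vertices, and without cut-vertices. -/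
def Biconnected : Prop :=
  G.Connected ∧ 2 ≤ Nat.card G.V ∧ ∀ v, ¬ G.IsCutVertex v

/-- The vertices covered by a set of edges. -/
def VertexSetOf (C : Set G.E) : Set G.V := {v | ∃ e ∈ C, v ∈ G.ends e}

/-- No two edge-disjoint cycles share more than two vertices. -/
def NoTwoCyclesShareThree : Prop :=
  ∀ C1 C2 : Set G.E, G.IsCycle C1 → G.IsCycle C2 → Disjoint C1 C2 →
    (G.VertexSetOf C1 ∩ G.VertexSetOf C2).ncard ≤ 2

/-- An Eulerian multiedge: two vertices joined by an even positive number of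
parallel edges. -/
def IsEulerianMultiedge : Prop :=
  Nat.card G.V = 2 ∧ 0 < Nat.card G.E ∧ Even (Nat.card G.E)

end MGraph

/-- Isomorphism of multigraphs. -/
structure MIso (G H : MGraph) where
  vEquiv : G.V ≃ H.V
  eEquiv : G.E ≃ H.E
  ends_eq : ∀ e, H.ends (eEquiv e) = (G.ends e).map vEquiv

namespace MGraph

/-- Vertex-identification: glue `u1 ∈ V(G1)` with `u2 ∈ V(G2)`. -/
noncomputable def vertexIdent (G1 G2 : MGraph) (u1 : G1.V) (u2 : G2.V) : MGraph where
  V := G1.V ⊕ {v : G2.V // v ≠ u2}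
  E := G1.E ⊕ G2.E
  finV := by have := G1.finV; have := G2.finV; infer_instance
  finE := by have := G1.finE; have := G2.finE; infer_instance
  ends := fun e =>
    match e with
    | Sum.inl e => (G1.ends e).map Sum.inl
    | Sum.inr e => (G2.ends e).map
        (fun v => if h : v = u2 then Sum.inl u1 else Sum.inr ⟨v, h⟩)
  noLoop := by
    rintro (e | e) h
    · exact G1.noLoop e ((Sym2.isDiag_map Sum.inl_injective).mp h)
    · refine G2.noLoop e ((Sym2.isDiag_map ?_).mp h)
      intro a b hab
      by_cases ha : a = u2 <;> by_cases hb : b = u2 <;>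
        simp [ha, hb] at hab ⊢ <;> simp_all

/-- Edge-identification: delete `e1` and `e2` (with endpoints `u1, v1` resp.
`u2, v2`) and add the new edges `u1u2` and `v1v2`. -/
def edgeIdent (G1 G2 : MGraph) (e1 : G1.E) (e2 : G2.E)
    (u1 v1 : G1.V) (u2 v2 : G2.V) : MGraph where
  V := G1.V ⊕ G2.V
  E := {e : G1.E // e ≠ e1} ⊕ {e : G2.E // e ≠ e2} ⊕ Bool
  finV := by have := G1.finV; have := G2.finV; infer_instance
  finE := by have := G1.finE; have := G2.finE; infer_instance
  ends := fun e =>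
    match e with
    | Sum.inl e => (G1.ends e.1).map Sum.inl
    | Sum.inr (Sum.inl e) => (G2.ends e.1).map Sum.inr
    | Sum.inr (Sum.inr true) => s(Sum.inl u1, Sum.inr u2)
    | Sum.inr (Sum.inr false) => s(Sum.inl v1, Sum.inr v2)
  noLoop := by
    rintro (e | e | b) h
    · exact G1.noLoop e.1 ((Sym2.isDiag_map Sum.inl_injective).mp h)
    · exact G2.noLoop e.1 ((Sym2.isDiag_map Sum.inr_injective).mp h)
    · cases b <;> simp [Sym2.mk_isDiag_iff] at h

/-- Vertex-edge-identification: identify `v1` with `v2`, delete `e1 = u1v1`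
and `e2 = u2v2`, and add a new edge `u1u2`. -/
noncomputable def vertexEdgeIdent (G1 G2 : MGraph) (e1 : G1.E) (e2 : G2.E)
    (u1 v1 : G1.V) (u2 v2 : G2.V) (h2 : G2.ends e2 = s(u2, v2)) : MGraph where
  V := G1.V ⊕ {w : G2.V // w ≠ v2}
  E := {e : G1.E // e ≠ e1} ⊕ {e : G2.E // e ≠ e2} ⊕ Unit
  finV := by have := G1.finV; have := G2.finV; infer_instance
  finE := by have := G1.finE; have := G2.finE; infer_instance
  ends := fun e =>
    match e with
    | Sum.inl e => (G1.ends e.1).map Sum.inl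
    | Sum.inr (Sum.inl e) => (G2.ends e.1).map
        (fun w => if h : w = v2 then Sum.inl v1 else Sum.inr ⟨w, h⟩)
    | Sum.inr (Sum.inr _) =>
        s(Sum.inl u1, Sum.inr ⟨u2, fun h =>
          G2.noLoop e2 (by rw [h2, h]; exact Sym2.mk_isDiag_iff.mpr rfl)⟩)
  noLoop := by
    rintro (e | e | u) h
    · exact G1.noLoop e.1 ((Sym2.isDiag_map Sum.inl_injective).mp h)
    · refine G2.noLoop e.1 ((Sym2.isDiag_map ?_).mp h)
      intro a b hab
      by_cases ha : a = v2 <;> by_cases hb : b = v2 <;>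
        simp [ha, hb] at hab ⊢ <;> simp_all
    · simp [Sym2.mk_isDiag_iff] at h

/-- Delete an edge from a multigraph. -/
def deleteEdge (G : MGraph) (e : G.E) : MGraph where
  V := G.V
  E := {f : G.E // f ≠ e}
  finV := G.finV
  finE := by have := G.finE; infer_instance
  ends := fun f => G.ends f.1
  noLoop := fun f => G.noLoop f.1

/-- `Sym2.pmap`-style map into a subtype. -/
noncomputable def sym2Pmap {α β : Type} {p : α → Prop} (f : ∀ a, p a → β)
    (s : Sym2 α) (h : ∀ a ∈ s, p a) : Sym2 β :=
  let z := Classical.choose (Quot.exists_rep s)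
  s(f z.1 (h z.1 (by
      have hz : Quot.mk _ z = s := Classical.choose_spec (Quot.exists_rep s)
      rw [← hz]; exact Sym2.mem_mk_left z.1 z.2)),
    f z.2 (h z.2 (by
      have hz : Quot.mk _ z = s := Classical.choose_spec (Quot.exists_rep s)
      rw [← hz]; exact Sym2.mem_mk_right z.1 z.2)))

/-- Delete a vertex (and all incident edges) from a multigraph. -/
noncomputable def deleteVertex (G : MGraph) (v : G.V) : MGraph where
  V := {w : G.V // w ≠ v}
  E := {e : G.E // v ∉ G.ends e}
  finV := by have := G.finV; infer_instance
  finE := by have := G.finE; infer_instance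
  ends := fun e => sym2Pmap (fun a ha => (⟨a, ha⟩ : {w : G.V // w ≠ v}))
    (G.ends e.1) (fun a ha hav => e.2 (hav ▸ ha))
  noLoop := by
    rintro ⟨e, he⟩ h
    apply G.noLoop e
    unfold sym2Pmap at h
    have hz : Quot.mk _ (Classical.choose (Quot.exists_rep (G.ends e))) = G.ends e :=
      Classical.choose_spec (Quot.exists_rep (G.ends e))
    rw [Sym2.mk_isDiag_iff] at h
    have : (Classical.choose (Quot.exists_rep (G.ends e))).1 =
        (Classical.choose (Quot.exists_rep (G.ends e))).2 := congrArg Subtype.val h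
    rw [← hz]
    exact Sym2.mk_isDiag_iff.mpr this

end MGraph

/-- A tree decomposition of a multigraph: a tree of bags covering all vertices
and edges such that the bags containing a given vertex form a subtree. -/
structure TreeDecomp (G : MGraph) where
  ι : Type
  t : SimpleGraph ι
  isTree : t.IsTree
  bag : ι → Set G.V
  covers_vertex : ∀ v : G.V, ∃ i, v ∈ bag i
  covers_edge : ∀ e : G.E, ∃ i, ∀ v ∈ G.ends e, v ∈ bag i
  bags_connected : ∀ v : G.V, (SimpleGraph.induce {i | v ∈ bag i} t).Connected

namespace MGraph

/-- The graph has treewidth at most `k`. -/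
def twLE (G : MGraph) (k : ℕ) : Prop :=
  ∃ T : TreeDecomp G, ∀ i, (T.bag i).ncard ≤ k + 1

/-- Treewidth of a multigraph. -/
noncomputable def treewidth (G : MGraph) : ℕ := sInf {k | G.twLE k}

/-- The closed necklace on `n ≥ 2` vertices: a cycle of length `n` with all
of its edges doubled. -/
def necklace (n : ℕ) (hn : 2 ≤ n) : MGraph where
  V := ZMod n
  E := ZMod n × Bool
  finV := by have : NeZero n := ⟨by omega⟩; infer_instance
  finE := by have : NeZero n := ⟨by omega⟩; infer_instance
  ends := fun e => s(e.1, e.1 + 1)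
  noLoop := by
    have : Fact (1 < n) := ⟨hn⟩
    intro e h
    rw [Sym2.mk_isDiag_iff] at h
    exact one_ne_zero (left_eq_add.mp h)

end MGraph

/-!
Forward direction: `G1` is a retract of the identified graph. Collapsing every vertex coming
from `G2` onto an endpoint `c` of `e1` sends each edge of the identified graph to an edge of `G1`
or to a single vertex (the new edge `u1u2` becomes `e1` or collapses), and choosing `c` different
from a vertex `z` turns `z`-avoiding paths into `z`-avoiding paths of `G1`. The same works for
`G2`, collapsing the vertices from `G1` onto an endpoint of `e2`.

Backward direction: a biconnected graph with at least two edges stays connected when one edge is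
deleted, so `G1 - e1` and `G2 - e2` embed as connected pieces sharing `v1 = v2`. A path of `G1`
avoiding a vertex `z` that uses `e1 = u1v1` is rerouted along the new edge `u1u2` and a path from
`u2` to `v2` in `G2 - e2`, which misses `z`; symmetrically for `G2`.
-/

namespace MGraph

variable {G G' : MGraph}

theorem ne_of_ends_eq {e : G.E} {u v : G.V} (h : G.ends e = s(u, v)) : u ≠ v := fun huv =>
  G.noLoop e (by rw [h, huv]; exact Sym2.mk_isDiag_iff.mpr rfl)

theorem exists_ends_eq (e : G.E) : ∃ u v, G.ends e = s(u, v) :=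
  (G.ends e).inductionOn fun u v => ⟨u, v, rfl⟩

theorem exists_mem_ends_ne (e : G.E) (z : G.V) : ∃ c ∈ G.ends e, c ≠ z := by
  obtain ⟨u, v, huv⟩ := exists_ends_eq e
  have hne : u ≠ v := ne_of_ends_eq huv
  rw [huv]
  by_cases hu : u = z
  · exact ⟨v, Sym2.mem_mk_right u v, hu ▸ hne.symm⟩
  · exact ⟨u, Sym2.mem_mk_left u v, hu⟩

theorem two_le_card_of_ne {a b : G.V} (hab : a ≠ b) : 2 ≤ Nat.card G.V :=
  have := G.finV
  Finite.one_lt_card_iff_nontrivial.mpr ⟨a, b, hab⟩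

theorem AdjOn.symm {F : Set G.E} {a b : G.V} (h : G.AdjOn F a b) : G.AdjOn F b a := by
  obtain ⟨e, he, hends⟩ := h
  exact ⟨e, he, hends.trans Sym2.eq_swap⟩

theorem AdjOn.mono {F F' : Set G.E} (hF : F ⊆ F') {a b : G.V} (h : G.AdjOn F a b) :
    G.AdjOn F' a b := by
  obtain ⟨e, he, hends⟩ := h
  exact ⟨e, hF he, hends⟩

theorem reflGen_adjOn_of_mem_ends {e : G.E} {a b : G.V} (ha : a ∈ G.ends e)
    (hb : b ∈ G.ends e) : Relation.ReflGen (G.AdjOn Set.univ) a b := by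
  by_cases hab : a = b
  · exact hab ▸ .refl
  · exact .single ⟨e, trivial, ((Sym2.mem_and_mem_iff hab).mp ⟨ha, hb⟩)⟩

theorem reflGen_adjOn_symm {F : Set G.E} {a b : G.V} (h : Relation.ReflGen (G.AdjOn F) a b) :
    Relation.ReflGen (G.AdjOn F) b a := by
  cases h with
  | refl => exact .refl
  | single h => exact .single h.symm

theorem ReachOn.symm {F : Set G.E} {a b : G.V} (h : G.ReachOn F a b) : G.ReachOn F b a := by
  induction h with
  | refl => exact .refl
  | tail _ hcd ih => exact Relation.ReflTransGen.head hcd.symm ih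

theorem ReachOn.trans {F : Set G.E} {a b c : G.V} (hab : G.ReachOn F a b)
    (hbc : G.ReachOn F b c) : G.ReachOn F a c :=
  Relation.ReflTransGen.trans hab hbc

theorem ReachAvoid.single {x a b : G.V} (ha : a ≠ x) (hb : b ≠ x)
    (hab : G.AdjOn Set.univ a b) : G.ReachAvoid x a b :=
  Relation.ReflTransGen.single (⟨ha, hb, hab⟩ : a ≠ x ∧ b ≠ x ∧ _)

theorem ReachAvoid.symm {x a b : G.V} (h : G.ReachAvoid x a b) : G.ReachAvoid x b a := by
  induction h with
  | refl => exact .refl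
  | tail _ hcd ih => exact Relation.ReflTransGen.head ⟨hcd.2.1, hcd.1, hcd.2.2.symm⟩ ih

theorem ReachAvoid.trans {x a b c : G.V} (hab : G.ReachAvoid x a b)
    (hbc : G.ReachAvoid x b c) : G.ReachAvoid x a c :=
  Relation.ReflTransGen.trans hab hbc

theorem ReachAvoid.reachOn_compl_singleton {x a b : G.V} {e : G.E} (hx : x ∈ G.ends e)
    (h : G.ReachAvoid x a b) : G.ReachOn {e}ᶜ a b :=
  Relation.ReflTransGen.mono (fun c d ⟨hc, hd, f, _, hf⟩ => ⟨f, fun hfe => by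
    rw [← Set.mem_singleton_iff.mp hfe, hf, Sym2.mem_iff] at hx
    exact hx.elim (fun h => hc h.symm) (fun h => hd h.symm), hf⟩) _ _ h

theorem reachAvoid_of_hub {x h a b : G.V} (hh : ∀ p, p ≠ x → G.ReachAvoid x p h)
    (ha : a ≠ x) (hb : b ≠ x) : G.ReachAvoid x a b :=
  (hh a ha).trans (hh b hb).symm

theorem biconnected_iff : G.Biconnected ↔ G.Connected ∧ 2 ≤ Nat.card G.V ∧
    ∀ x a b, a ≠ x → b ≠ x → G.ReachAvoid x a b := by
  refine and_congr_right fun hG => and_congr_right fun _ => ?_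
  exact forall_congr' fun x =>
    ⟨fun hx a b ha hb => by_contra fun hab => hx ⟨a, b, ha, hb, hG.2 a b, hab⟩,
      fun hx ⟨a, b, ha, hb, _, hab⟩ => hab (hx a b ha hb)⟩

theorem Biconnected.reachAvoid (hG : G.Biconnected) {x a b : G.V} (ha : a ≠ x) (hb : b ≠ x) :
    G.ReachAvoid x a b :=
  (biconnected_iff.mp hG).2.2 x a b ha hb

theorem Biconnected.reachOn_compl_singleton (hG : G.Biconnected) (hE : 2 ≤ Nat.card G.E)
    (e : G.E) (a b : G.V) : G.ReachOn {e}ᶜ a b := by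
  obtain ⟨u, v, huv⟩ := exists_ends_eq e
  have hu : u ∈ G.ends e := huv ▸ Sym2.mem_mk_left u v
  have hv : v ∈ G.ends e := huv ▸ Sym2.mem_mk_right u v
  have hne : u ≠ v := ne_of_ends_eq huv
  have detour : G.ReachOn {e}ᶜ u v := by
    by_cases hw : ∃ w, w ≠ u ∧ w ≠ v
    · obtain ⟨w, hwu, hwv⟩ := hw
      exact ((hG.reachAvoid hne hwv).reachOn_compl_singleton hv).trans
        ((hG.reachAvoid hwu hne.symm).reachOn_compl_singleton hu)
    · -- every vertex is `u` or `v`, so a second edge is parallel to `e`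
      push Not at hw
      have := G.finE
      have : Nontrivial G.E := Finite.one_lt_card_iff_nontrivial.mp hE
      obtain ⟨f, hf⟩ := exists_ne e
      obtain ⟨p, hp, hpu⟩ := exists_mem_ends_ne f u
      obtain ⟨q, hq, hqv⟩ := exists_mem_ends_ne f v
      have hqu : q = u := by_contra fun h => hqv (hw q h)
      have hf' : G.ends f = s(u, v) :=
        (Sym2.mem_and_mem_iff hne).mp ⟨hqu ▸ hq, hw p hpu ▸ hp⟩
      exact .single ⟨f, hf, hf'⟩
  refine (hG.1.2 a b).lift' id fun c d ⟨f, _, hf⟩ => ?_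
  by_cases hfe : f = e
  · rw [hfe, huv] at hf
    rcases Sym2.eq_iff.mp hf with ⟨rfl, rfl⟩ | ⟨rfl, rfl⟩
    exacts [detour, detour.symm]
  · exact .single ⟨f, hfe, hf⟩

theorem ReachOn.map {F : Set G.E} {π : G.V → G'.V}
    (hπ : ∀ a b, G.AdjOn F a b → G'.AdjOn Set.univ (π a) (π b)) {a b : G.V}
    (h : G.ReachOn F a b) : G'.ReachOn Set.univ (π a) (π b) :=
  Relation.ReflTransGen.lift π hπ _ _ h

theorem ReachOn.reachAvoid_map {F : Set G.E} {π : G.V → G'.V} {x : G'.V}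
    (hπ : ∀ a b, G.AdjOn F a b → G'.AdjOn Set.univ (π a) (π b)) (hx : ∀ a, π a ≠ x)
    {a b : G.V} (h : G.ReachOn F a b) : G'.ReachAvoid x (π a) (π b) :=
  Relation.ReflTransGen.lift π (fun c d hcd => ⟨hx c, hx d, hπ c d hcd⟩) _ _ h

theorem ReachAvoid.map_of_bypass {π : G.V → G'.V} {e : G.E} {u v z a b : G.V}
    (hπ : ∀ a b, G.AdjOn {e}ᶜ a b → G'.AdjOn Set.univ (π a) (π b)) (hinj : π.Injective)
    (he : G.ends e = s(u, v)) (hbypass : u ≠ z → v ≠ z → G'.ReachAvoid (π z) (π u) (π v))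
    (h : G.ReachAvoid z a b) : G'.ReachAvoid (π z) (π a) (π b) := by
  refine Relation.ReflTransGen.lift' π (fun c d ⟨hc, hd, f, _, hf⟩ => ?_) _ _ h
  by_cases hfe : f = e
  · rw [hfe, he] at hf
    rcases Sym2.eq_iff.mp hf with ⟨rfl, rfl⟩ | ⟨rfl, rfl⟩
    exacts [hbypass hc hd, (hbypass hd hc).symm]
  · exact ReachAvoid.single (hinj.ne hc) (hinj.ne hd) (hπ c d ⟨f, hfe, hf⟩)

theorem Biconnected.of_retractions (hG : G.Biconnected) (σ : G'.V → G.V) {u v : G'.V}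
    (huv : u ≠ v)
    (hπ : ∀ z : G'.V, ∃ π : G.V → G'.V, (∀ a, π (σ a) = a) ∧
      (∀ a b, G.AdjOn Set.univ a b → Relation.ReflGen (G'.AdjOn Set.univ) (π a) (π b)) ∧
      ∀ a, a ≠ σ z → π a ≠ z) :
    G'.Biconnected := by
  refine biconnected_iff.mpr
    ⟨⟨⟨u⟩, fun a b => ?_⟩, two_le_card_of_ne huv, fun z a b ha hb => ?_⟩
  · obtain ⟨π, hπσ, hadj, -⟩ := hπ u
    have : G'.ReachOn Set.univ (π (σ a)) (π (σ b)) :=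
      Relation.ReflTransGen.lift' π (fun c d hcd => (hadj c d hcd).to_reflTransGen) _ _
        (hG.1.2 (σ a) (σ b))
    rwa [hπσ, hπσ] at this
  · obtain ⟨π, hπσ, hadj, hz⟩ := hπ z
    have hσ : σ.Injective := Function.LeftInverse.injective hπσ
    have step : ∀ c d, c ≠ σ z ∧ d ≠ σ z ∧ G.AdjOn Set.univ c d →
        G'.ReachAvoid z (π c) (π d) := by
      rintro c d ⟨hc, hd, hcd⟩
      rcases (Relation.reflGen_iff _ _ _).mp (hadj c d hcd) with h | h
      · exact h ▸ .refl
      · exact ReachAvoid.single (hz c hc) (hz d hd) h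
    have : G'.ReachAvoid z (π (σ a)) (π (σ b)) :=
      Relation.ReflTransGen.lift' π step _ _ (hG.reachAvoid (hσ.ne ha) (hσ.ne hb))
    rwa [hπσ, hπσ] at this

end MGraph

namespace MGraph.vertexEdgeIdent

variable {G1 G2 : MGraph} {e1 : G1.E} {e2 : G2.E} {u1 v1 : G1.V} {u2 v2 : G2.V}
  {h2 : G2.ends e2 = s(u2, v2)}

noncomputable def glue (v1 : G1.V) (v2 : G2.V) (w : G2.V) : G1.V ⊕ {w : G2.V // w ≠ v2} :=
  if h : w = v2 then Sum.inl v1 else Sum.inr ⟨w, h⟩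

theorem glue_self : glue v1 v2 v2 = Sum.inl v1 := dif_pos rfl

theorem glue_of_ne {w : G2.V} (hw : w ≠ v2) : glue v1 v2 w = Sum.inr ⟨w, hw⟩ := dif_neg hw

theorem inl_eq_glue_iff {c : G1.V} {w : G2.V} : Sum.inl c = glue v1 v2 w ↔ c = v1 ∧ w = v2 := by
  by_cases hw : w = v2
  · simp [hw, glue_self]
  · simp [hw, glue_of_ne hw]

theorem glue_injective : (glue v1 v2).Injective := by
  intro c d h
  by_cases hd : d = v2
  · rw [hd, glue_self, eq_comm, inl_eq_glue_iff] at h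
    exact h.2.trans hd.symm
  by_cases hc : c = v2
  · rw [hc, glue_self, inl_eq_glue_iff] at h
    exact absurd h.2 hd
  rw [glue_of_ne hc, glue_of_ne hd] at h
  exact congrArg Subtype.val (Sum.inr_injective h)

local notation "H" => vertexEdgeIdent G1 G2 e1 e2 u1 v1 u2 v2 h2

theorem adjOn_inl {c d : G1.V} (h : G1.AdjOn {e1}ᶜ c d) :
    (H).AdjOn Set.univ (Sum.inl c) (Sum.inl d) := by
  obtain ⟨f, hf, hcd⟩ := h
  exact ⟨Sum.inl ⟨f, hf⟩, trivial, by
    change (G1.ends f).map Sum.inl = _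
    rw [hcd]
    rfl⟩

theorem adjOn_glue {c d : G2.V} (h : G2.AdjOn {e2}ᶜ c d) :
    (H).AdjOn Set.univ (glue v1 v2 c) (glue v1 v2 d) := by
  obtain ⟨f, hf, hcd⟩ := h
  exact ⟨Sum.inr (Sum.inl ⟨f, hf⟩), trivial, by
    change (G2.ends f).map (glue v1 v2) = _
    rw [hcd]
    rfl⟩

theorem adjOn_inl_glue : (H).AdjOn Set.univ (Sum.inl u1) (glue v1 v2 u2) :=
  ⟨Sum.inr (Sum.inr ()), trivial, by rw [glue_of_ne (ne_of_ends_eq h2)]; rfl⟩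

@[elab_as_elim]
theorem adjOn_induction {P : (H).V → (H).V → Prop} (hP : ∀ a b, P a b → P b a)
    (hinl : ∀ c d, G1.AdjOn {e1}ᶜ c d → P (Sum.inl c) (Sum.inl d))
    (hglue : ∀ c d, G2.AdjOn {e2}ᶜ c d → P (glue v1 v2 c) (glue v1 v2 d))
    (hnew : P (Sum.inl u1) (glue v1 v2 u2)) {a b : (H).V} (h : (H).AdjOn Set.univ a b) :
    P a b := by
  obtain ⟨e, -, he⟩ := h
  have of_sym2_eq : ∀ {c d}, P c d → s(c, d) = s(a, b) → P a b := fun hcd h => by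
    rcases Sym2.eq_iff.mp h with ⟨rfl, rfl⟩ | ⟨rfl, rfl⟩
    exacts [hcd, hP _ _ hcd]
  rcases e with ⟨f, hf⟩ | ⟨f, hf⟩ | _
  · obtain ⟨c, d, hcd⟩ := exists_ends_eq f
    refine of_sym2_eq (hinl c d ⟨f, hf, hcd⟩) ?_
    rw [← he]
    change _ = (G1.ends f).map _
    rw [hcd]
    rfl
  · obtain ⟨c, d, hcd⟩ := exists_ends_eq f
    refine of_sym2_eq (hglue c d ⟨f, hf, hcd⟩) ?_
    rw [← he]
    change _ = (G2.ends f).map _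
    rw [hcd]
    rfl
  · exact of_sym2_eq hnew (by rw [← he, glue_of_ne (ne_of_ends_eq h2)]; rfl)

def proj₁ (v2 : G2.V) (c : G1.V) : G1.V ⊕ {w : G2.V // w ≠ v2} → G1.V :=
  Sum.elim id fun _ => c

noncomputable def proj₂ (v1 : G1.V) (v2 c : G2.V) : G1.V ⊕ {w : G2.V // w ≠ v2} → G2.V :=
  Sum.elim (fun a => if a = v1 then v2 else c) Subtype.val

theorem proj₁_glue_mem (h1 : G1.ends e1 = s(u1, v1)) {c : G1.V} (hc : c ∈ G1.ends e1)
    (w : G2.V) : proj₁ v2 c (glue v1 v2 w) ∈ G1.ends e1 := by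
  by_cases hw : w = v2
  · rw [hw, glue_self, h1]
    exact Sym2.mem_mk_right u1 v1
  · rwa [glue_of_ne hw]

theorem proj₂_glue {c : G2.V} (w : G2.V) : proj₂ v1 v2 c (glue v1 v2 w) = w := by
  by_cases hw : w = v2
  · rw [hw, glue_self]
    exact if_pos rfl
  · rw [glue_of_ne hw]
    rfl

theorem proj₂_inl_mem (h2 : G2.ends e2 = s(u2, v2)) {c : G2.V} (hc : c ∈ G2.ends e2)
    (a : G1.V) : proj₂ v1 v2 c (Sum.inl a) ∈ G2.ends e2 := by
  change (if a = v1 then v2 else c) ∈ G2.ends e2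
  split_ifs
  · exact h2 ▸ Sym2.mem_mk_right u2 v2
  · exact hc

theorem proj₁_ne {c z : G1.V} (hcz : c ≠ z) {a : G1.V ⊕ {w : G2.V // w ≠ v2}}
    (ha : a ≠ Sum.inl z) : proj₁ v2 c a ≠ z := by
  rcases a with a | _
  exacts [fun h => ha (congrArg Sum.inl h), hcz]

theorem proj₂_ne {c z : G2.V} (hcz : c ≠ z) {a : G1.V ⊕ {w : G2.V // w ≠ v2}}
    (ha : a ≠ glue v1 v2 z) : proj₂ v1 v2 c a ≠ z := by
  rcases a with a | ⟨w, hw⟩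
  · by_cases hav : a = v1
    · rw [proj₂, Sum.elim_inl, if_pos hav]
      rintro rfl
      exact ha (inl_eq_glue_iff.mpr ⟨hav, rfl⟩)
    · rwa [proj₂, Sum.elim_inl, if_neg hav]
  · rintro rfl
    exact ha (glue_of_ne hw).symm

theorem reflGen_proj₁ (h1 : G1.ends e1 = s(u1, v1)) {c : G1.V} (hc : c ∈ G1.ends e1)
    {a b : (H).V} (h : (H).AdjOn Set.univ a b) :
    Relation.ReflGen (G1.AdjOn Set.univ) (proj₁ v2 c a) (proj₁ v2 c b) :=
  adjOn_induction (fun _ _ => reflGen_adjOn_symm)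
    (fun _ _ hcd => .single (hcd.mono (Set.subset_univ _)))
    (fun _ _ _ => reflGen_adjOn_of_mem_ends (proj₁_glue_mem h1 hc _) (proj₁_glue_mem h1 hc _))
    (reflGen_adjOn_of_mem_ends (h1 ▸ Sym2.mem_mk_left u1 v1) (proj₁_glue_mem h1 hc _)) h

theorem reflGen_proj₂ {c : G2.V} (hc : c ∈ G2.ends e2) {a b : (H).V}
    (h : (H).AdjOn Set.univ a b) :
    Relation.ReflGen (G2.AdjOn Set.univ) (proj₂ v1 v2 c a) (proj₂ v1 v2 c b) :=
  adjOn_induction (fun _ _ => reflGen_adjOn_symm)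
    (fun _ _ _ => reflGen_adjOn_of_mem_ends (proj₂_inl_mem h2 hc _) (proj₂_inl_mem h2 hc _))
    (fun _ _ hcd => by
      rw [proj₂_glue, proj₂_glue]
      exact .single (hcd.mono (Set.subset_univ _)))
    (reflGen_adjOn_of_mem_ends (proj₂_inl_mem h2 hc _)
      (by rw [proj₂_glue, h2]; exact Sym2.mem_mk_left u2 v2)) h

theorem biconnected_left (h1 : G1.ends e1 = s(u1, v1)) (hH : (H).Biconnected) :
    G1.Biconnected :=
  hH.of_retractions Sum.inl (ne_of_ends_eq h1) fun z => by
    obtain ⟨c, hc, hcz⟩ := exists_mem_ends_ne e1 z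
    exact ⟨proj₁ v2 c, fun _ => rfl, fun _ _ => reflGen_proj₁ h1 hc,
      fun _ => proj₁_ne hcz⟩

theorem biconnected_right (hH : (H).Biconnected) : G2.Biconnected :=
  hH.of_retractions (glue v1 v2) (ne_of_ends_eq h2) fun z => by
    obtain ⟨c, hc, hcz⟩ := exists_mem_ends_ne e2 z
    exact ⟨proj₂ v1 v2 c, proj₂_glue, fun _ _ => reflGen_proj₂ hc,
      fun _ => proj₂_ne hcz⟩

theorem reachAvoid_inl_of_ne (h1 : G1.ends e1 = s(u1, v1)) (hG1 : G1.Biconnected)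
    (hG2 : ∀ a b, G2.ReachOn {e2}ᶜ a b) {z : G1.V} (hz : z ≠ v1) {a b : (H).V}
    (ha : a ≠ Sum.inl z) (hb : b ≠ Sum.inl z) : (H).ReachAvoid (Sum.inl z) a b := by
  have side₂ : ∀ w, (H).ReachAvoid (Sum.inl z) (glue v1 v2 w) (Sum.inl v1) := fun w => by
    have := (hG2 w v2).reachAvoid_map (G' := H) (fun _ _ => adjOn_glue)
      fun _ h => hz (inl_eq_glue_iff.mp h.symm).1
    rwa [glue_self] at this
  have bypass : u1 ≠ z → v1 ≠ z → (H).ReachAvoid (Sum.inl z) (Sum.inl u1) (Sum.inl v1) :=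
    fun hu _ => (ReachAvoid.single (fun h => hu (Sum.inl_injective h))
      (fun h => hz (inl_eq_glue_iff.mp h.symm).1) adjOn_inl_glue).trans (side₂ u2)
  refine reachAvoid_of_hub (h := Sum.inl v1) (fun p hp => ?_) ha hb
  rcases p with c | ⟨w, hw⟩
  · exact (hG1.reachAvoid (ne_of_apply_ne Sum.inl hp) hz.symm).map_of_bypass
      (fun _ _ => adjOn_inl) Sum.inl_injective h1 bypass
  · simpa only [glue_of_ne hw] using side₂ w

theorem reachAvoid_inl_self (h1 : G1.ends e1 = s(u1, v1)) (hG1 : G1.Biconnected)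
    (hG2 : G2.Biconnected) {a b : (H).V} (ha : a ≠ Sum.inl v1) (hb : b ≠ Sum.inl v1) :
    (H).ReachAvoid (Sum.inl v1) a b := by
  have hu1 : u1 ≠ v1 := ne_of_ends_eq h1
  have hu2 : u2 ≠ v2 := ne_of_ends_eq h2
  -- a path avoiding `v1` (resp. `v2`) never uses `e1` (resp. `e2`), so no bypass is needed
  refine reachAvoid_of_hub (h := Sum.inl u1) (fun p hp => ?_) ha hb
  rcases p with c | ⟨w, hw⟩
  · exact (hG1.reachAvoid (ne_of_apply_ne Sum.inl hp) hu1).map_of_bypass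
      (fun _ _ => adjOn_inl) Sum.inl_injective h1 fun _ h => absurd rfl h
  · have side₂ := (hG2.reachAvoid hw hu2).map_of_bypass (G' := H)
      (fun _ _ => adjOn_glue) glue_injective h2 fun _ h => absurd rfl h
    rw [glue_self, glue_of_ne hw] at side₂
    refine side₂.trans (ReachAvoid.single ?_ (fun h => hu1 (Sum.inl_injective h))
      adjOn_inl_glue.symm)
    rw [← glue_self]
    exact glue_injective.ne hu2

theorem reachAvoid_inr (hG1 : ∀ a b, G1.ReachOn {e1}ᶜ a b) (hG2 : G2.Biconnected)
    {z : G2.V} (hz : z ≠ v2) {a b : (H).V} (ha : a ≠ Sum.inr ⟨z, hz⟩)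
    (hb : b ≠ Sum.inr ⟨z, hz⟩) : (H).ReachAvoid (Sum.inr ⟨z, hz⟩) a b := by
  rw [← glue_of_ne (v1 := v1) hz] at ha hb ⊢
  have side₁ : ∀ c, (H).ReachAvoid (glue v1 v2 z) (Sum.inl c) (Sum.inl v1) := fun c =>
    (hG1 c v1).reachAvoid_map (fun _ _ => adjOn_inl) fun _ h => hz (inl_eq_glue_iff.mp h).2
  have bypass : u2 ≠ z → v2 ≠ z →
      (H).ReachAvoid (glue v1 v2 z) (glue v1 v2 u2) (glue v1 v2 v2) := fun hu _ => by
    rw [glue_self]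
    exact (ReachAvoid.single (glue_injective.ne hu) (fun h => hz (inl_eq_glue_iff.mp h).2)
      adjOn_inl_glue.symm).trans (side₁ u1)
  refine reachAvoid_of_hub (h := Sum.inl v1) (fun p hp => ?_) ha hb
  rcases p with c | ⟨w, hw⟩
  · exact side₁ c
  · rw [← glue_of_ne hw] at hp ⊢
    simpa only [glue_self] using
      (hG2.reachAvoid (ne_of_apply_ne _ hp) hz.symm).map_of_bypass
        (fun _ _ => adjOn_glue) glue_injective h2 bypass

theorem biconnected_of_biconnected (hm1 : 2 ≤ Nat.card G1.E) (hm2 : 2 ≤ Nat.card G2.E)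
    (h1 : G1.ends e1 = s(u1, v1)) (hG1 : G1.Biconnected) (hG2 : G2.Biconnected) :
    (H).Biconnected := by
  have hG1' := hG1.reachOn_compl_singleton hm1 e1
  have hG2' := hG2.reachOn_compl_singleton hm2 e2
  have hub : ∀ p : (H).V, (H).ReachOn Set.univ p (Sum.inl v1) := by
    rintro (c | ⟨w, hw⟩)
    · exact (hG1' c v1).map fun _ _ => adjOn_inl
    · have := (hG2' w v2).map (G' := H) fun _ _ => adjOn_glue
      rwa [glue_self, glue_of_ne hw] at this
  refine biconnected_iff.mpr ⟨⟨⟨Sum.inl v1⟩, fun a b => (hub a).trans (hub b).symm⟩,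
    two_le_card_of_ne (a := Sum.inl u1) (b := Sum.inl v1) ?_, ?_⟩
  · exact fun h => ne_of_ends_eq h1 (Sum.inl_injective h)
  rintro (z | ⟨z, hz⟩) a b ha hb
  · by_cases hz : z = v1
    · subst hz
      exact reachAvoid_inl_self h1 hG1 hG2 ha hb
    · exact reachAvoid_inl_of_ne h1 hG1 hG2' hz ha hb
  · exact reachAvoid_inr hG1' hG2 hz ha hb

end MGraph.vertexEdgeIdent

/-- vertex-edge-identification of graphs with at least two edges
is biconnected iff both factors are biconnected. -/
theorem vertexEdgeIdent_biconnected_iff (G1 G2 : MGraph)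
    (hm1 : 2 ≤ Nat.card G1.E) (hm2 : 2 ≤ Nat.card G2.E)
    (e1 : G1.E) (e2 : G2.E) (u1 v1 : G1.V) (u2 v2 : G2.V)
    (h1 : G1.ends e1 = s(u1, v1)) (h2 : G2.ends e2 = s(u2, v2)) :
    (MGraph.vertexEdgeIdent G1 G2 e1 e2 u1 v1 u2 v2 h2).Biconnected ↔
      G1.Biconnected ∧ G2.Biconnected :=
  ⟨fun hH => ⟨MGraph.vertexEdgeIdent.biconnected_left h1 hH,
      MGraph.vertexEdgeIdent.biconnected_right hH⟩,
    fun ⟨hG1, hG2⟩ => MGraph.vertexEdgeIdent.biconnected_of_biconnected hm1 hm2 h1 hG1 hG2⟩
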